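/- arXiv:1805.00602 — 5 statements merged into one kernel-verified Lean document; each statement's English description precedes it below -/
import Mathlib

section
/- Let C ∈ M_n(ℂ), let F be a convex subset of M_n(ℂ) containing a scalar matrix μI. Then W_C(F) is star-shaped with star-center μ·tr(C). -/
/-!
For a fixed unitary `U`, the map `A ↦ tr (C U* A U)` is linear and sends `μ • 1` to `μ * tr C`.
Hence it maps the segment from `μ • 1` to `A`, which lies in `F` by convexity, onto the segment
from `μ * tr C` to `tr (C U* A U)`.
-/

open Matrix

/-- The C-numerical range of a matrix A: `{tr(C U* A U) : U unitary}`. -/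
def cNumRange {n : ℕ} (C A : Matrix (Fin n) (Fin n) ℂ) : Set ℂ :=
  {z | ∃ U : Matrix (Fin n) (Fin n) ℂ, U ∈ Matrix.unitaryGroup (Fin n) ℂ ∧
    z = (C * Uᴴ * A * U).trace}

/-- The C-numerical range of a set of matrices: union of the C-numerical ranges. -/
def cNumRangeSet {n : ℕ} (C : Matrix (Fin n) (Fin n) ℂ)
    (F : Set (Matrix (Fin n) (Fin n) ℂ)) : Set ℂ :=
  ⋃ A ∈ F, cNumRange C A

/-- `c` is a star-center of `S` if every segment from `c` to a point of `S` lies in `S`. -/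
def IsStarCenter (c : ℂ) (S : Set ℂ) : Prop := ∀ z ∈ S, segment ℝ c z ⊆ S

namespace Matrix

variable {m R : Type*} [Fintype m]

def traceMulMul [CommSemiring R] (X Y : Matrix m m R) : Matrix m m R →ₗ[R] R :=
  traceLinearMap m R R ∘ₗ LinearMap.mulLeft R X ∘ₗ LinearMap.mulRight R Y

theorem traceMulMul_apply [CommSemiring R] (X Y A : Matrix m m R) :
    traceMulMul X Y A = (X * A * Y).trace := by
  simp [traceMulMul, Matrix.mul_assoc]

theorem trace_mul_conjTranspose_smul_one_mul [DecidableEq m] [CommRing R] [StarRing R]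
    {U : Matrix m m R} (hU : U ∈ unitaryGroup m R) (C : Matrix m m R) (μ : R) :
    (C * Uᴴ * (μ • 1) * U).trace = μ * C.trace := by
  rw [Matrix.mul_smul, Matrix.mul_one, Matrix.smul_mul, Matrix.mul_assoc,
    ← star_eq_conjTranspose, Unitary.star_mul_self_of_mem hU, Matrix.mul_one, trace_smul,
    smul_eq_mul]

end Matrix

theorem stmt_6 {n : ℕ} (C : Matrix (Fin n) (Fin n) ℂ)
    (F : Set (Matrix (Fin n) (Fin n) ℂ)) (hF : Convex ℝ F) (μ : ℂ)
    (hμ : μ • (1 : Matrix (Fin n) (Fin n) ℂ) ∈ F) :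
    IsStarCenter (μ * C.trace) (cNumRangeSet C F) := by
  intro z hz
  obtain ⟨A, hA, U, hU, rfl⟩ : ∃ A ∈ F, z ∈ cNumRange C A := by
    simpa [cNumRangeSet] using hz
  let f := ((traceMulMul (C * Uᴴ) U).restrictScalars ℝ).toAffineMap
  have hf : ∀ B, f B = (C * Uᴴ * B * U).trace := traceMulMul_apply _ _
  rw [← trace_mul_conjTranspose_smul_one_mul hU, ← hf, ← hf, ← image_segment]
  rintro _ ⟨B, hB, rfl⟩
  exact Set.mem_biUnion (hF.segment_subset hμ hA hB) ⟨U, hU, hf B⟩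
end

section
/- Let C, A, B ∈ M_n(ℂ) and F = conv{A, B}. If μ is a common star-center of W_C(A) and W_C(B), then W_C(F) is star-shaped with star-center μ; moreover, for any unitary V, the filled triangle conv{μ, tr(CV*AV), tr(CV*BV)} is contained in W_C(F). -/
open Matrix

/-!
Let `D ⊆ ℂ²` be the image of the unitary group, which is path-connected, under
`U ↦ (tr(C U* A U), tr(C U* B U))`. Since `μ` is a star-center of `W_C(A)` and of `W_C(B)`, either
coordinate of a point of `D` can be moved anywhere on its segment towards `μ` without leaving `D`.
Take `q` in a triangle `conv{μ, a, b}` with `(a, b) ∈ D` and suppose `q` lies on no segment `[x, y]`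
with `(x, y) ∈ D`. By the shrinking property `q` then lies on no edge of any triangle
`conv{μ, x, y}` with `(x, y) ∈ D`. The set of pairs `(x, y)` whose triangle contains `q` is closed.
By Cramer's rule it is also a neighbourhood of every pair whose triangle contains `q` off its edges,
so it cuts out a clopen subset of `D`. This subset contains `(a, b)` but not the degenerate pair
`(μ, y₀)` obtained by shrinking `a` to `μ`, which contradicts the connectedness of `D`.
Star-shapedness follows because `[μ, z] ⊆ conv{μ, x, y}` for `z ∈ [x, y]`.
-/

open Set ComplexConjugate

namespace Unitary

variable {A : Type*} [CStarAlgebra A]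

lemma circle_smul_mem (z : Circle) {a : A} (ha : a ∈ unitary A) : z • a ∈ unitary A :=
  Unitary.smul_mem_of_mem (R := ℂ) (by
    rw [Unitary.mem_iff, Complex.star_def, Complex.conj_mul', Complex.mul_conj', Circle.norm_coe]
    norm_num) ha

lemma joined_circle_smul (z : Circle) (u : unitary A) :
    Joined (⟨z • (u : A), circle_smul_mem z u.2⟩ : unitary A) u := by
  have := (PathConnectedSpace.joined z 1).map
    (f := fun w : Circle => (⟨w • (u : A), circle_smul_mem w u.2⟩ : unitary A)) (by fun_prop)
  simpa using this

/-- Rotating `u` by `-ζ⁻¹` moves `-1` out of its spectrum, so the rotated unitary lies within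
distance `2` of `1`. -/
lemma joined_one_of_notMem_spectrum (u : unitary A) {ζ : Circle}
    (hζ : (ζ : ℂ) ∉ spectrum ℂ (u : A)) : Joined 1 u := by
  set v : unitary A := ⟨(-ζ⁻¹ : Circle) • (u : A), circle_smul_mem _ u.2⟩
  have hv : -1 ∉ spectrum ℂ (v : A) := by
    have h1 : Circle.toUnits (-ζ⁻¹) • (ζ : ℂ) = -1 := by simp [Units.smul_def]
    rw [← h1]
    exact fun h => hζ (spectrum.smul_mem_smul_iff.mp h)
  exact (Unitary.joined 1 v ((norm_sub_one_lt_two_iff v.2).mpr hv)).trans (joined_circle_smul _ u)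

end Unitary

lemma Circle.exists_coe_notMem {s : Set ℂ} (hs : s.Finite) : ∃ ζ : Circle, (ζ : ℂ) ∉ s := by
  have hinf := (Icc_infinite (zero_lt_one' ℝ)).image
    (Circle.exp_injOn_Icc (by linarith [Real.pi_gt_three]))
  obtain ⟨_, ⟨t, -, rfl⟩, ht⟩ := (hinf.sdiff (hs.preimage Subtype.coe_injective.injOn)).nonempty
  exact ⟨_, ht⟩

theorem Matrix.isPathConnected_unitaryGroup (n : Type*) [Fintype n] [DecidableEq n] :
    IsPathConnected (Matrix.unitaryGroup n ℂ : Set (Matrix n n ℂ)) := by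
  -- the L2 operator norm, whose topology is the entrywise one
  let := Matrix.instCStarAlgebra (n := n)
  rw [isPathConnected_iff_pathConnectedSpace]
  refine ⟨⟨1⟩, fun u v => ?_⟩
  have joined_one (w : unitaryGroup n ℂ) : Joined 1 w := by
    obtain ⟨ζ, hζ⟩ := Circle.exists_coe_notMem (Matrix.finite_spectrum (w : Matrix n n ℂ))
    exact Unitary.joined_one_of_notMem_spectrum w hζ
  exact (joined_one u).symm.trans (joined_one v)

section ConvexHullTriple

variable {E : Type*} [AddCommGroup E] [Module ℝ E] {μ x y q : E}

lemma mem_convexHull_triple_iff : q ∈ convexHull ℝ {μ, x, y} ↔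
    ∃ a b : ℝ, 0 ≤ a ∧ 0 ≤ b ∧ a + b ≤ 1 ∧ q = μ + a • (x - μ) + b • (y - μ) := by
  constructor
  · rw [← convexJoin_singleton_segment, mem_convexJoin]
    rintro ⟨_, rfl, _, ⟨u, v, hu, hv, huv, rfl⟩, ⟨u', v', hu', hv', huv', rfl⟩⟩
    obtain rfl : u = 1 - v := by linarith
    obtain rfl : u' = 1 - v' := by linarith
    exact ⟨v' * (1 - v), v' * v, by positivity, by positivity, by nlinarith, by module⟩
  · rintro ⟨a, b, ha, hb, hab, rfl⟩
    have := (convex_convexHull ℝ {μ, x, y}).sum_mem (t := Finset.univ) (w := ![1 - a - b, a, b])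
      (z := ![μ, x, y]) (fun i _ => by fin_cases i <;> simp <;> linarith)
      (by simp [Fin.sum_univ_three]; ring)
      (fun i _ => by fin_cases i <;> apply subset_convexHull <;> simp)
    convert this using 1
    simp [Fin.sum_univ_three]
    module

lemma mem_segment_of_mem_convexHull_triple_of_collinear (h : Collinear ℝ {μ, x, y})
    (hq : q ∈ convexHull ℝ {μ, x, y}) :
    q ∈ segment ℝ μ x ∨ q ∈ segment ℝ μ y ∨ q ∈ segment ℝ x y := by
  have mem_of_subset {a b : E} (h : ({μ, x, y} : Set E) ⊆ segment ℝ a b) : q ∈ segment ℝ a b :=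
    convexHull_min h (convex_segment a b) hq
  rcases h.wbtw_or_wbtw_or_wbtw with h | h | h <;> rw [← mem_segment_iff_wbtw] at h
  · refine Or.inr (Or.inl (mem_of_subset ?_))
    simp [insert_subset_iff, h, left_mem_segment, right_mem_segment]
  · refine Or.inl (mem_of_subset ?_)
    simp [insert_subset_iff, segment_symm ℝ x μ ▸ h, left_mem_segment, right_mem_segment]
  · refine Or.inr (Or.inr (mem_of_subset ?_))
    simp [insert_subset_iff, segment_symm ℝ y x ▸ h, left_mem_segment, right_mem_segment]

variable [TopologicalSpace E] [IsTopologicalAddGroup E] [ContinuousSMul ℝ E] [T2Space E]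

lemma isClosed_setOf_mem_convexHull_triple (μ q : E) :
    IsClosed {p : E × E | q ∈ convexHull ℝ {μ, p.1, p.2}} := by
  let K : Set (ℝ × ℝ) := {c | 0 ≤ c.1 ∧ 0 ≤ c.2 ∧ c.1 + c.2 ≤ 1}
  have hK : IsCompact K := by
    refine ((isCompact_Icc (a := (0 : ℝ)) (b := 1)).prod (isCompact_Icc (a := (0 : ℝ)) (b := 1))
      ).of_isClosed_subset ((isClosed_le continuous_const continuous_fst).inter
        ((isClosed_le continuous_const continuous_snd).inter
          (isClosed_le (continuous_fst.add continuous_snd) continuous_const))) ?_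
    rintro c ⟨h₁, h₂, h₁₂⟩
    exact ⟨⟨h₁, by linarith⟩, ⟨h₂, by linarith⟩⟩
  have := isCompact_iff_compactSpace.mp hK
  convert isClosedMap_snd_of_compactSpace _ (isClosed_eq (f := fun c : K × (E × E) => q)
    (g := fun c => μ + c.1.1.1 • (c.2.1 - μ) + c.1.1.2 • (c.2.2 - μ)) continuous_const
    (by fun_prop))
  ext p
  simp [mem_convexHull_triple_iff, K, and_assoc]

end ConvexHullTriple

/-- The determinant of `x` and `y` viewed as vectors of `ℝ²`. -/
def cross (x y : ℂ) : ℝ := (conj x * y).im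

lemma exists_eq_smul_of_cross_eq_zero {x y : ℂ} (h : cross x y = 0) (hx : x ≠ 0) :
    ∃ r : ℝ, y = r • x := by
  have him : (y / x).im = 0 := by
    rw [Complex.div_im]
    simp only [cross, Complex.mul_im, Complex.conj_re, Complex.conj_im] at h
    rw [← sub_div, div_eq_zero_iff]
    left
    linarith
  refine ⟨(y / x).re, ?_⟩
  rw [Complex.real_smul, show ((y / x).re : ℂ) = y / x from Complex.ext rfl (by simp [him]),
    div_mul_cancel₀ y hx]

lemma collinear_of_cross_sub_eq_zero {μ x y : ℂ} (h : cross (x - μ) (y - μ) = 0) :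
    Collinear ℝ {μ, x, y} := by
  rcases eq_or_ne x μ with rfl | hx
  · simpa using collinear_pair ℝ x y
  obtain ⟨r, hr⟩ := exists_eq_smul_of_cross_eq_zero h (sub_ne_zero.mpr hx)
  rw [collinear_iff_of_mem (mem_insert μ _)]
  refine ⟨x - μ, ?_⟩
  simp only [mem_insert_iff, mem_singleton_iff, vadd_eq_add, forall_eq_or_imp, forall_eq]
  exact ⟨⟨0, by simp⟩, ⟨1, by simp⟩, ⟨r, by rw [← hr]; ring⟩⟩

@[fun_prop]
lemma Continuous.cross {X : Type*} [TopologicalSpace X] {f g : X → ℂ} (hf : Continuous f)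
    (hg : Continuous g) : Continuous fun p => cross (f p) (g p) := by
  unfold _root_.cross; fun_prop

lemma cross_add_smul_left (x y : ℂ) (a b : ℝ) : cross (a • x + b • y) y = a * cross x y := by
  simp [cross]; ring

lemma cross_add_smul_right (x y : ℂ) (a b : ℝ) : cross x (a • x + b • y) = b * cross x y := by
  simp [cross]; ring

lemma eq_div_cross_smul_add_div_cross_smul {x y : ℂ} (h : cross x y ≠ 0) (q : ℂ) :
    q = (cross q y / cross x y) • x + (cross x q / cross x y) • y := by
  have cramer : cross x y • q = cross q y • x + cross x q • y := by
    apply Complex.ext <;> simp [cross] <;> ring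
  rw [div_eq_inv_mul, div_eq_inv_mul, mul_smul, mul_smul, ← smul_add, ← cramer, inv_smul_smul₀ h]

lemma mem_interior_setOf_mem_convexHull_triple {μ q x y : ℂ} (hq : q ∈ convexHull ℝ {μ, x, y})
    (hμx : q ∉ segment ℝ μ x) (hμy : q ∉ segment ℝ μ y) (hxy : q ∉ segment ℝ x y) :
    (x, y) ∈ interior {p : ℂ × ℂ | q ∈ convexHull ℝ {μ, p.1, p.2}} := by
  have hxy0 : cross (x - μ) (y - μ) ≠ 0 := fun h => by
    rcases mem_segment_of_mem_convexHull_triple_of_collinear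
      (collinear_of_cross_sub_eq_zero h) hq with h | h | h <;> contradiction
  obtain ⟨a, b, ha₀, hb₀, hab₁, hq_eq⟩ := mem_convexHull_triple_iff.mp hq
  have ha : 0 < a := ha₀.lt_of_ne fun h => hμy ⟨1 - b, b, by linarith, hb₀, by ring, by
    rw [hq_eq, ← h]; module⟩
  have hb : 0 < b := hb₀.lt_of_ne fun h => hμx ⟨1 - a, a, by linarith, ha.le, by ring, by
    rw [hq_eq, ← h]; module⟩
  have hab : a + b < 1 := hab₁.lt_of_ne fun h => hxy ⟨a, b, ha.le, hb.le, h, by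
    rw [hq_eq, ← sub_eq_of_eq_add' h.symm]; module⟩
  let c₁ : ℂ × ℂ → ℝ := fun p => cross (q - μ) (p.2 - μ) / cross (p.1 - μ) (p.2 - μ)
  let c₂ : ℂ × ℂ → ℝ := fun p => cross (p.1 - μ) (q - μ) / cross (p.1 - μ) (p.2 - μ)
  have hqμ : q - μ = a • (x - μ) + b • (y - μ) := by rw [hq_eq]; abel
  have hc₁ : c₁ (x, y) = a := by
    simp only [c₁, hqμ, cross_add_smul_left, mul_div_cancel_right₀ _ hxy0]
  have hc₂ : c₂ (x, y) = b := by
    simp only [c₂, hqμ, cross_add_smul_right, mul_div_cancel_right₀ _ hxy0]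
  have hden : Continuous fun p : ℂ × ℂ => cross (p.1 - μ) (p.2 - μ) := by fun_prop
  have hc₁c : ContinuousAt c₁ (x, y) :=
    (by fun_prop : Continuous _).continuousAt.div hden.continuousAt hxy0
  have hc₂c : ContinuousAt c₂ (x, y) :=
    (by fun_prop : Continuous _).continuousAt.div hden.continuousAt hxy0
  rw [mem_interior_iff_mem_nhds]
  filter_upwards [continuousAt_const.eventually_lt hc₁c (hc₁ ▸ ha),
    continuousAt_const.eventually_lt hc₂c (hc₂ ▸ hb),
    (hc₁c.add hc₂c).eventually_lt continuousAt_const (by simpa [hc₁, hc₂] using hab),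
    hden.continuousAt.eventually_ne hxy0] with p h₁ h₂ h₁₂ hp
  refine mem_convexHull_triple_iff.mpr ⟨c₁ p, c₂ p, h₁.le, h₂.le, h₁₂.le, ?_⟩
  rw [add_assoc, ← sub_eq_iff_eq_add']
  exact eq_div_cross_smul_add_div_cross_smul hp (q - μ)

theorem convexHull_triple_subset_iUnion_segment {D : Set (ℂ × ℂ)} (hD : IsPreconnected D) {μ : ℂ}
    (hfst : ∀ p ∈ D, ∀ w ∈ segment ℝ μ p.1, ∃ y, (w, y) ∈ D)
    (hsnd : ∀ p ∈ D, ∀ w ∈ segment ℝ μ p.2, ∃ x, (x, w) ∈ D) {a b : ℂ} (hab : (a, b) ∈ D) :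
    convexHull ℝ {μ, a, b} ⊆ ⋃ p ∈ D, segment ℝ p.1 p.2 := by
  intro q hq
  by_contra hcon
  simp only [mem_iUnion, not_exists] at hcon
  have not_mem_fst : ∀ p ∈ D, q ∉ segment ℝ μ p.1 := fun p hp hqp => by
    obtain ⟨y, hy⟩ := hfst p hp q hqp
    exact hcon _ hy (left_mem_segment ℝ q y)
  have not_mem_snd : ∀ p ∈ D, q ∉ segment ℝ μ p.2 := fun p hp hqp => by
    obtain ⟨x, hx⟩ := hsnd p hp q hqp
    exact hcon _ hx (right_mem_segment ℝ x q)
  set S := {p : ℂ × ℂ | q ∈ convexHull ℝ {μ, p.1, p.2}}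
  obtain ⟨y₀, hy₀⟩ := hfst (a, b) hab μ (left_mem_segment ℝ μ a)
  have hy₀S : (μ, y₀) ∉ S := by
    simpa [S, convexHull_pair] using not_mem_snd _ hy₀
  obtain ⟨p, hpD, hpS, hpi⟩ := isPreconnected_closed_iff.mp hD S (interior S)ᶜ
    (isClosed_setOf_mem_convexHull_triple μ q) isOpen_interior.isClosed_compl
    (fun p _ => (em (p ∈ S)).imp id fun h hi => h (interior_subset hi))
    ⟨(a, b), hab, hq⟩ ⟨(μ, y₀), hy₀, fun hi => hy₀S (interior_subset hi)⟩
  exact hpi (mem_interior_setOf_mem_convexHull_triple hpS (not_mem_fst p hpD) (not_mem_snd p hpD)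
    (hcon p hpD))

section CNumericalRange

variable {n : ℕ} (C : Matrix (Fin n) (Fin n) ℂ)

def traceConj (U : Matrix (Fin n) (Fin n) ℂ) : Matrix (Fin n) (Fin n) ℂ →ₗ[ℝ] ℂ where
  toFun X := (C * Uᴴ * X * U).trace
  map_add' X Y := by simp [Matrix.mul_add, Matrix.add_mul]
  map_smul' r X := by simp

lemma continuous_trace_conj (X : Matrix (Fin n) (Fin n) ℂ) :
    Continuous fun U : Matrix (Fin n) (Fin n) ℂ => (C * Uᴴ * X * U).trace :=
  (((continuous_const.matrix_mul continuous_id.matrix_conjTranspose).matrix_mul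
    continuous_const).matrix_mul continuous_id).matrix_trace

lemma cNumRangeSet_segment (A B : Matrix (Fin n) (Fin n) ℂ) :
    cNumRangeSet C (segment ℝ A B) = ⋃ U ∈ unitaryGroup (Fin n) ℂ,
      segment ℝ (C * Uᴴ * A * U).trace (C * Uᴴ * B * U).trace := by
  ext z
  simp only [cNumRangeSet, cNumRange, mem_iUnion, mem_ofPred_eq, exists_prop]
  constructor
  · rintro ⟨X, hX, U, hU, rfl⟩
    exact ⟨U, hU, image_segment ℝ (traceConj C U).toAffineMap A B ▸ ⟨X, hX, rfl⟩⟩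
  · rintro ⟨U, hU, hz⟩
    obtain ⟨X, hX, rfl⟩ := (image_segment ℝ (traceConj C U).toAffineMap A B).symm ▸ hz
    exact ⟨X, hX, U, hU, rfl⟩

lemma convexHull_subset_cNumRangeSet_segment {A B : Matrix (Fin n) (Fin n) ℂ} {μ : ℂ}
    (hA : IsStarCenter μ (cNumRange C A)) (hB : IsStarCenter μ (cNumRange C B))
    {U : Matrix (Fin n) (Fin n) ℂ} (hU : U ∈ unitaryGroup (Fin n) ℂ) :
    convexHull ℝ {μ, (C * Uᴴ * A * U).trace, (C * Uᴴ * B * U).trace} ⊆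
      cNumRangeSet C (segment ℝ A B) := by
  let f (V : Matrix (Fin n) (Fin n) ℂ) : ℂ × ℂ := ((C * Vᴴ * A * V).trace, (C * Vᴴ * B * V).trace)
  have hD : IsPreconnected (f '' unitaryGroup (Fin n) ℂ) :=
    (isPathConnected_unitaryGroup (Fin n)).isConnected.isPreconnected.image f
      ((continuous_trace_conj C A).prodMk (continuous_trace_conj C B)).continuousOn
  rw [cNumRangeSet_segment]
  refine (convexHull_triple_subset_iUnion_segment hD ?_ ?_ ⟨U, hU, rfl⟩).trans ?_
  · rintro _ ⟨V, hV, rfl⟩ w hw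
    obtain ⟨W, hW, rfl⟩ := hA _ ⟨V, hV, rfl⟩ hw
    exact ⟨_, W, hW, rfl⟩
  · rintro _ ⟨V, hV, rfl⟩ w hw
    obtain ⟨W, hW, rfl⟩ := hB _ ⟨V, hV, rfl⟩ hw
    exact ⟨_, W, hW, rfl⟩
  · simp only [iUnion_subset_iff, forall_mem_image]
    exact fun V hV => subset_biUnion_of_mem (u := fun V => segment ℝ (f V).1 (f V).2) hV

end CNumericalRange

theorem stmt_10 {n : ℕ} (C A B : Matrix (Fin n) (Fin n) ℂ) (μ : ℂ)
    (hA : IsStarCenter μ (cNumRange C A)) (hB : IsStarCenter μ (cNumRange C B)) :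
    IsStarCenter μ (cNumRangeSet C (segment ℝ A B)) ∧
      ∀ V : Matrix (Fin n) (Fin n) ℂ, V ∈ Matrix.unitaryGroup (Fin n) ℂ →
        convexHull ℝ {μ, (C * Vᴴ * A * V).trace, (C * Vᴴ * B * V).trace}
          ⊆ cNumRangeSet C (segment ℝ A B) := by
  refine ⟨fun z hz => ?_, fun V hV => convexHull_subset_cNumRangeSet_segment C hA hB hV⟩
  obtain ⟨U, hU, hzU⟩ := mem_iUnion₂.mp (cNumRangeSet_segment C A B ▸ hz)
  have hμ : μ ∈ convexHull ℝ {μ, (C * Uᴴ * A * U).trace, (C * Uᴴ * B * U).trace} :=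
    subset_convexHull ℝ _ (mem_insert _ _)
  have hz : z ∈ convexHull ℝ {μ, (C * Uᴴ * A * U).trace, (C * Uᴴ * B * U).trace} :=
    segment_subset_convexHull (mem_insert_of_mem _ (mem_insert _ _))
      (mem_insert_of_mem _ (mem_insert_of_mem _ (mem_singleton _))) hzU
  exact ((convex_convexHull ℝ _).segment_subset hμ hz).trans
    (convexHull_subset_cNumRangeSet_segment C hA hB hU)
end

section
/- Let C = E_{11} ∈ M_2(ℂ), A = diag(1+i, 1−i), and F = conv{A, −A}. Then W_C(F) = conv{0, 1+i, 1−i} ∪ conv{0, −1−i, −1+i}, and this set is not convex. -/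
/-!
For diagonal `X = diag(a, b)` one has `tr (E₁₁ U* X U) = |U₀₀|² a + |U₁₀|² b`, and the first column
of a unitary can be any unit vector (take a real rotation), so `W_C(X)` is the segment `[a, b]`.
The segment `F` consists of the matrices `t • A`, `t ∈ [-1, 1]`, so `W_C(F)` is the union of the
segments `t • [1 + i, 1 - i]`: the triangle with apex `0` over `[1 + i, 1 - i]` together with its
negative. The midpoint `i` of `1 + i` and `-1 + i` lies in neither triangle, each of which sits in
a half-plane `Im z ≤ ± Re z`.
-/

open Matrix Complex

open Set Pointwise

section RealVectorSpace

variable {E : Type*} [AddCommGroup E] [Module ℝ E]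

lemma segment_neg_eq_image_smul (x : E) :
    segment ℝ x (-x) = (fun t : ℝ => t • x) '' Icc (-1) 1 := by
  ext z
  constructor
  · rintro ⟨a, b, ha, hb, hab, rfl⟩
    exact ⟨a - b, ⟨by linarith, by linarith⟩, by simp only [sub_smul, smul_neg, ← sub_eq_add_neg]⟩
  · rintro ⟨t, ⟨ht₁, ht₂⟩, rfl⟩
    refine ⟨(1 + t) / 2, (1 - t) / 2, by linarith, by linarith, by ring, ?_⟩
    rw [smul_neg, ← sub_eq_add_neg, ← sub_smul]
    congr 1
    ring

lemma convexHull_insert_zero {s : Set E} (hs : s.Nonempty) :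
    convexHull ℝ (insert 0 s) = ⋃ t ∈ Icc (0 : ℝ) 1, t • convexHull ℝ s := by
  rw [convexHull_insert hs, convexJoin_singleton_left]
  ext z
  simp only [mem_iUnion, mem_smul_set, exists_prop, segment_eq_image, smul_zero, zero_add,
    mem_image]
  constructor
  · rintro ⟨y, hy, t, ht, rfl⟩
    exact ⟨t, ht, y, hy, rfl⟩
  · rintro ⟨t, ht, y, hy, rfl⟩
    exact ⟨y, hy, t, ht, rfl⟩

lemma biUnion_Icc_neg_one_one_smul_convexHull {s : Set E} (hs : s.Nonempty) :
    ⋃ t ∈ Icc (-1 : ℝ) 1, t • convexHull ℝ s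
      = convexHull ℝ (insert 0 s) ∪ convexHull ℝ (insert 0 (-s)) := by
  rw [convexHull_insert_zero hs, convexHull_insert_zero hs.neg, convexHull_neg]
  ext z
  simp only [mem_union, mem_iUnion, exists_prop, mem_Icc]
  constructor
  · rintro ⟨t, ⟨ht₁, ht₂⟩, hz⟩
    rcases le_total 0 t with ht | ht
    · exact Or.inl ⟨t, ⟨ht, ht₂⟩, hz⟩
    · refine Or.inr ⟨-t, ⟨by linarith, by linarith⟩, ?_⟩
      rwa [smul_set_neg, neg_smul_set, neg_neg]
  · rintro (⟨t, ⟨ht₁, ht₂⟩, hz⟩ | ⟨t, ⟨ht₁, ht₂⟩, hz⟩)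
    · exact ⟨t, ⟨by linarith, ht₂⟩, hz⟩
    · refine ⟨-t, ⟨by linarith, by linarith⟩, ?_⟩
      rwa [neg_smul_set, ← smul_set_neg]

end RealVectorSpace

lemma trace_single_mul_conjTranspose_mul_diagonal_mul {n : ℕ} (i : Fin n)
    (U : Matrix (Fin n) (Fin n) ℂ) (d : Fin n → ℂ) :
    (single i i 1 * Uᴴ * diagonal d * U).trace = ∑ j, (normSq (U j i) : ℂ) * d j := by
  simp only [Matrix.mul_assoc, trace_single_mul, one_smul, mul_apply, diagonal_apply, ite_mul,
    zero_mul, Finset.sum_ite_eq, Finset.mem_univ, if_true, conjTranspose_apply, RCLike.star_def,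
    normSq_eq_conj_mul_self]
  refine Finset.sum_congr rfl fun j _ => ?_
  ring

lemma sum_normSq_apply_eq_one {n : ℕ} {U : Matrix (Fin n) (Fin n) ℂ}
    (hU : U ∈ unitaryGroup (Fin n) ℂ) (i : Fin n) : ∑ j, normSq (U j i) = 1 := by
  have h := congr_fun₂ (mem_unitaryGroup_iff'.mp hU) i i
  simp only [mul_apply, star_apply, one_apply_eq, RCLike.star_def,
    ← normSq_eq_conj_mul_self] at h
  exact_mod_cast h

lemma cNumRange_smul {n : ℕ} (C A : Matrix (Fin n) (Fin n) ℂ) (t : ℝ) :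
    cNumRange C (t • A) = t • cNumRange C A := by
  ext z
  simp only [cNumRange, mem_smul_set, mem_ofPred_eq, Matrix.mul_smul, Matrix.smul_mul,
    trace_smul]
  constructor
  · rintro ⟨U, hU, rfl⟩
    exact ⟨_, ⟨U, hU, rfl⟩, rfl⟩
  · rintro ⟨_, ⟨U, hU, rfl⟩, rfl⟩
    exact ⟨U, hU, rfl⟩

def realRotation (c s : ℝ) : Matrix (Fin 2) (Fin 2) ℂ :=
  !![(c : ℂ), -(s : ℂ); (s : ℂ), (c : ℂ)]

lemma realRotation_mem_unitaryGroup {c s : ℝ} (h : c ^ 2 + s ^ 2 = 1) :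
    realRotation c s ∈ unitaryGroup (Fin 2) ℂ := by
  have hC : (c : ℂ) ^ 2 + (s : ℂ) ^ 2 = 1 := by exact_mod_cast h
  rw [mem_unitaryGroup_iff']
  ext i j
  fin_cases i <;> fin_cases j <;>
    simp [realRotation, mul_apply, Fin.sum_univ_two, conj_ofReal] <;> grind

lemma cNumRange_single_diagonal_fin_two (a b : ℂ) :
    cNumRange (single 0 0 1) (diagonal ![a, b]) = segment ℝ a b := by
  ext z
  simp only [cNumRange, mem_ofPred_eq, trace_single_mul_conjTranspose_mul_diagonal_mul,
    Fin.sum_univ_two, Matrix.cons_val_zero, Matrix.cons_val_one]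
  constructor
  · rintro ⟨U, hU, rfl⟩
    have h := sum_normSq_apply_eq_one hU 0
    rw [Fin.sum_univ_two] at h
    exact ⟨_, _, normSq_nonneg _, normSq_nonneg _, h, by simp only [real_smul]⟩
  · rintro ⟨p, q, hp, hq, hpq, rfl⟩
    refine ⟨realRotation √p √q, realRotation_mem_unitaryGroup ?_, ?_⟩
    · rw [Real.sq_sqrt hp, Real.sq_sqrt hq, hpq]
    · simp [realRotation, normSq_ofReal, Real.mul_self_sqrt hp, Real.mul_self_sqrt hq,
        real_smul]

lemma im_le_mul_re_of_mem_convexHull {s : Set ℂ} {c : ℝ} (hs : ∀ z ∈ s, z.im ≤ c * z.re)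
    {z : ℂ} (hz : z ∈ convexHull ℝ s) : z.im ≤ c * z.re := by
  have hconv : Convex ℝ {w : ℂ | w.im - c * w.re ≤ 0} :=
    convex_halfSpace_le (imLm - c • reLm).isLinear 0
  exact sub_nonpos.mp (convexHull_min (fun w hw => sub_nonpos.mpr (hs w hw)) hconv hz)

lemma not_convex_convexHull_union :
    ¬ Convex ℝ (convexHull ℝ {0, 1 + I, 1 - I} ∪ convexHull ℝ {0, -1 - I, -1 + I}) := by
  intro hconv
  have hmid := hconv (.inl (subset_convexHull ℝ _ (by simp) : 1 + I ∈ _))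
    (.inr (subset_convexHull ℝ _ (by simp) : -1 + I ∈ _))
    (by norm_num : (0 : ℝ) ≤ 1 / 2) (by norm_num : (0 : ℝ) ≤ 1 / 2) (by norm_num)
  have hI : (1 / 2 : ℝ) • (1 + I) + (1 / 2 : ℝ) • (-1 + I) = I := by
    simp only [real_smul]; push_cast; ring
  rw [hI] at hmid
  rcases hmid with h | h
  · have := im_le_mul_re_of_mem_convexHull (c := 1) (by simp) h
    norm_num at this
  · have := im_le_mul_re_of_mem_convexHull (c := -1) (by simp) h
    norm_num at this

theorem stmt_13 (C A : Matrix (Fin 2) (Fin 2) ℂ)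
    (hC : C = Matrix.single 0 0 1)
    (hA : A = !![1 + I, 0; 0, 1 - I]) :
    cNumRangeSet C (segment ℝ A (-A))
        = convexHull ℝ {0, 1 + I, 1 - I} ∪ convexHull ℝ {0, -1 - I, -1 + I} ∧
      ¬ Convex ℝ (cNumRangeSet C (segment ℝ A (-A))) := by
  have hA' : A = diagonal ![1 + I, 1 - I] := by rw [hA, diagonal_fin_two]; rfl
  have hW : cNumRangeSet C (segment ℝ A (-A))
      = convexHull ℝ {0, 1 + I, 1 - I} ∪ convexHull ℝ {0, -1 - I, -1 + I} := by
    rw [cNumRangeSet, segment_neg_eq_image_smul, biUnion_image]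
    simp only [cNumRange_smul, hC, hA', cNumRange_single_diagonal_fin_two, ← convexHull_pair]
    rw [biUnion_Icc_neg_one_one_smul_convexHull (insert_nonempty _ _), neg_insert, neg_singleton,
      neg_add', neg_sub', sub_neg_eq_add]
  exact ⟨hW, hW ▸ not_convex_convexHull_union⟩
end

section
/- Let A_1, …, A_m ∈ M_n(ℂ) and F = conv{A_1, …, A_m}. Then W(F) equals the product numerical range W^⊗(A_1 ⊕ ⋯ ⊕ A_m) of the block-diagonal matrix A_1 ⊕ ⋯ ⊕ A_m viewed in M_m ⊗ M_n. -/
open Matrix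

/-- The classical numerical range of a matrix: `{x* X x : x a unit vector}`. -/
def numRange {n : ℕ} (X : Matrix (Fin n) (Fin n) ℂ) : Set ℂ :=
  {z | ∃ x : Fin n → ℂ, star x ⬝ᵥ x = 1 ∧ z = star x ⬝ᵥ X.mulVec x}

/-- The numerical range of a set of matrices: union of the numerical ranges. -/
def numRangeSet {n : ℕ} (F : Set (Matrix (Fin n) (Fin n) ℂ)) : Set ℂ :=
  ⋃ X ∈ F, numRange X

/-- The product numerical range of a matrix on a tensor product space
`ℂⁿ ⊗ ℂᵐ`: values `(u ⊗ v)* B (u ⊗ v)` over unit vectors `u ∈ ℂᵐ`, `v ∈ ℂⁿ`. -/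
def prodNumRange {m n : ℕ} (B : Matrix (Fin n × Fin m) (Fin n × Fin m) ℂ) : Set ℂ :=
  {z | ∃ u : Fin m → ℂ, ∃ v : Fin n → ℂ, star u ⬝ᵥ u = 1 ∧ star v ⬝ᵥ v = 1 ∧
    z = star (fun p : Fin n × Fin m => v p.1 * u p.2) ⬝ᵥ
        B.mulVec (fun p : Fin n × Fin m => v p.1 * u p.2)}

/-!
For unit vectors `u ∈ ℂᵐ`, `v ∈ ℂⁿ` one has
`(u ⊗ v)* (⊕ A_k) (u ⊗ v) = ∑ |u_k|² v* A_k v = v* (∑ |u_k|² A_k) v`,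
and as `u` runs over the unit sphere the weights `(|u_k|²)_k` run over exactly the standard
simplex (take `u_k = √w_k`). Since `conv {A_k}` is the image of the standard simplex under
`w ↦ ∑ w_k A_k`, both sides are the union of `W(∑ w_k A_k)` over the simplex.
-/

theorem convexHull_range_eq_image_stdSimplex {R E ι : Type*} [Field R] [LinearOrder R]
    [IsStrictOrderedRing R] [AddCommGroup E] [Module R E] [Fintype ι] (v : ι → E) :
    convexHull R (Set.range v) = (fun w : ι → R => ∑ i, w i • v i) '' stdSimplex R ι := by
  classical
  change _ = Fintype.linearCombination R v '' _
  rw [← convexHull_rangle_single_eq_stdSimplex, LinearMap.image_convexHull, ← Set.range_comp]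
  congr
  funext i
  simp [Fintype.linearCombination_apply_single]

theorem star_dotProduct_blockDiagonal_mulVec {m n R : Type*} [Fintype m] [Fintype n]
    [DecidableEq m] [CommSemiring R] [StarRing R] (A : m → Matrix n n R) (u : m → R)
    (v : n → R) :
    star (fun p : n × m => v p.1 * u p.2) ⬝ᵥ blockDiagonal A *ᵥ (fun p => v p.1 * u p.2) =
      ∑ k, star (u k) * u k * (star v ⬝ᵥ A k *ᵥ v) := by
  simp only [dotProduct, mulVec, blockDiagonal_apply, Pi.star_apply, star_mul',
    Fintype.sum_prod_type, ite_mul, zero_mul, Finset.sum_ite_eq, Finset.mem_univ, if_true,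
    Finset.mul_sum]
  rw [Finset.sum_comm]
  refine Finset.sum_congr rfl fun k _ => Finset.sum_congr rfl fun i _ =>
    Finset.sum_congr rfl fun j _ => ?_
  ring

theorem star_dotProduct_blockDiagonal_mulVec_eq_normSq_smul {m n : Type*} [Fintype m]
    [Fintype n] [DecidableEq m] (A : m → Matrix n n ℂ) (u : m → ℂ) (v : n → ℂ) :
    star (fun p : n × m => v p.1 * u p.2) ⬝ᵥ blockDiagonal A *ᵥ (fun p => v p.1 * u p.2) =
      star v ⬝ᵥ (∑ k, Complex.normSq (u k) • A k) *ᵥ v := by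
  simp [star_dotProduct_blockDiagonal_mulVec, sum_mulVec, dotProduct_sum, smul_mulVec,
    dotProduct_smul, Complex.normSq_eq_conj_mul_self]

theorem star_dotProduct_self_eq_sum_normSq {ι : Type*} [Fintype ι] (u : ι → ℂ) :
    star u ⬝ᵥ u = ((∑ k, Complex.normSq (u k) : ℝ) : ℂ) := by
  simp [dotProduct, Complex.normSq_eq_conj_mul_self]

theorem exists_unit_normSq_eq_iff_mem_stdSimplex {ι : Type*} [Fintype ι] (w : ι → ℝ) :
    (∃ u : ι → ℂ, star u ⬝ᵥ u = 1 ∧ (fun k => Complex.normSq (u k)) = w) ↔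
      w ∈ stdSimplex ℝ ι := by
  constructor
  · rintro ⟨u, hu, rfl⟩
    refine ⟨fun k => Complex.normSq_nonneg _, ?_⟩
    exact_mod_cast (star_dotProduct_self_eq_sum_normSq u).symm.trans hu
  · rintro ⟨hw₀, hw₁⟩
    have hnormSq : ∀ k, Complex.normSq (Real.sqrt (w k)) = w k := fun k => by
      rw [Complex.normSq_ofReal, Real.mul_self_sqrt (hw₀ k)]
    refine ⟨fun k => Real.sqrt (w k), ?_, funext hnormSq⟩
    simp [star_dotProduct_self_eq_sum_normSq, hnormSq, hw₁]

theorem mem_prodNumRange_blockDiagonal_iff {m n : ℕ} (A : Fin m → Matrix (Fin n) (Fin n) ℂ)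
    (z : ℂ) : z ∈ prodNumRange (blockDiagonal A) ↔
      ∃ w ∈ stdSimplex ℝ (Fin m), z ∈ numRange (∑ k, w k • A k) := by
  simp only [prodNumRange, numRange, Set.mem_ofPred_eq,
    star_dotProduct_blockDiagonal_mulVec_eq_normSq_smul,
    ← exists_unit_normSq_eq_iff_mem_stdSimplex]
  constructor
  · rintro ⟨u, v, hu, hv, rfl⟩
    exact ⟨_, ⟨u, hu, rfl⟩, v, hv, rfl⟩
  · rintro ⟨_, ⟨u, hu, rfl⟩, v, hv, rfl⟩
    exact ⟨u, v, hu, hv, rfl⟩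

theorem stmt_14 {m n : ℕ} (A : Fin m → Matrix (Fin n) (Fin n) ℂ) :
    numRangeSet (convexHull ℝ (Set.range A))
      = prodNumRange (Matrix.blockDiagonal A) := by
  ext z
  rw [numRangeSet, convexHull_range_eq_image_stdSimplex, Set.biUnion_image, Set.mem_iUnion₂,
    mem_prodNumRange_blockDiagonal_iff]
  simp only [exists_prop]
end

section
/- Let C ∈ M_n(ℂ), G ⊆ M_n(ℂ), F = conv G. If μ is a boundary point of W_C(F), then there exist B_1, B_2 ∈ G and a unitary V such that μ ∈ conv{tr(CV*B_1V), tr(CV*B_2V)}, i.e., μ lies on a segment between two points tr(CV*B_jV). -/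
open Matrix

/-!
For a fixed unitary `U`, the map `B ↦ tr(C U* B U)` is `ℝ`-linear, so if `μ = tr(C U* A U)` with
`A ∈ conv G`, then `μ` lies in the convex hull of the image of `G`, a subset of `W_C(conv G)`.
A boundary point of `W_C(conv G)` is therefore not interior to this planar hull, and by
Carathéodory's theorem a point of a hull in `ℝ²` avoiding its interior is already in the hull of
two of the generating points: a triangle with positive barycentric weights would contain it in
its interior.
-/

open Finset Module

section ConvexHull

variable {E : Type*} [NormedAddCommGroup E] [NormedSpace ℝ E] [FiniteDimensional ℝ E]

theorem AffineIndependent.sum_smul_mem_interior_convexHull {ι : Type*} [Fintype ι]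
    {z : ι → E} (hz : AffineIndependent ℝ z) (hcard : Fintype.card ι = finrank ℝ E + 1)
    {w : ι → ℝ} (hw₀ : ∀ i, 0 < w i) (hw₁ : ∑ i, w i = 1) :
    ∑ i, w i • z i ∈ interior (convexHull ℝ (Set.range z)) := by
  let b : AffineBasis ι ℝ E := ⟨z, hz, hz.affineSpan_eq_top_iff_card_eq_finrank_add_one.2 hcard⟩
  change _ ∈ interior (convexHull ℝ (Set.range b))
  rw [b.interior_convexHull, ← univ.affineCombination_eq_linear_combination _ _ hw₁]
  intro i
  change 0 < b.coord i (univ.affineCombination ℝ b w)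
  rw [b.coord_apply_combination_of_mem (mem_univ i) hw₁]
  exact hw₀ i

theorem exists_card_le_finrank_of_notMem_interior_convexHull {s : Set E} {x : E}
    (hx : x ∈ convexHull ℝ s) (hint : x ∉ interior (convexHull ℝ s)) :
    ∃ t : Finset E, ↑t ⊆ s ∧ #t ≤ finrank ℝ E ∧ x ∈ convexHull ℝ (t : Set E) := by
  classical
  obtain ⟨ι, _, z, w, hzs, hz, hw₀, hw₁, rfl⟩ := eq_pos_convex_span_of_mem_convexHull hx
  refine ⟨univ.image z, by simpa using hzs, ?_, ?_⟩
  · have hle : Fintype.card ι ≤ finrank ℝ E + 1 :=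
      hz.card_le_finrank_succ.trans (Nat.succ_le_succ (Submodule.finrank_le _))
    have hne : Fintype.card ι ≠ finrank ℝ E + 1 := fun hcard => hint <|
      interior_mono (convexHull_mono hzs) (hz.sum_smul_mem_interior_convexHull hcard hw₀ hw₁)
    exact card_image_le.trans (by simp only [card_univ]; omega)
  · rw [coe_image, coe_univ, Set.image_univ]
    exact (convex_convexHull ℝ _).sum_mem (fun i _ => (hw₀ i).le) hw₁
      (fun i _ => subset_convexHull ℝ _ (Set.mem_range_self i))

end ConvexHull

theorem Finset.exists_mem_segment_of_card_le_two {E : Type*} [AddCommGroup E] [Module ℝ E]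
    [DecidableEq E] {t : Finset E} (ht : #t ≤ 2) {x : E} (hx : x ∈ convexHull ℝ (t : Set E)) :
    ∃ a ∈ t, ∃ b ∈ t, x ∈ segment ℝ a b := by
  have hne : t.Nonempty := by simpa using (convexHull_nonempty_iff (𝕜 := ℝ)).1 ⟨x, hx⟩
  obtain h | h : #t = 1 ∨ #t = 2 := by have := hne.card_pos; omega
  · obtain ⟨a, rfl⟩ := card_eq_one.1 h
    refine ⟨a, mem_singleton_self a, a, mem_singleton_self a, ?_⟩
    simpa using hx
  · obtain ⟨a, b, -, rfl⟩ := card_eq_two.1 h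
    refine ⟨a, mem_insert_self a _, b, mem_insert_of_mem (mem_singleton_self b), ?_⟩
    simpa [convexHull_pair] using hx

theorem Complex.exists_mem_segment_of_notMem_interior_convexHull {s : Set ℂ} {x : ℂ}
    (hx : x ∈ convexHull ℝ s) (hint : x ∉ interior (convexHull ℝ s)) :
    ∃ a ∈ s, ∃ b ∈ s, x ∈ segment ℝ a b := by
  obtain ⟨t, hts, hcard, hxt⟩ := exists_card_le_finrank_of_notMem_interior_convexHull hx hint
  rw [Complex.finrank_real_complex] at hcard
  classical
  obtain ⟨a, ha, b, hb, hab⟩ := exists_mem_segment_of_card_le_two hcard hxt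
  exact ⟨a, hts ha, b, hts hb, hab⟩

noncomputable def unitaryConjTrace {n : ℕ} (C U : Matrix (Fin n) (Fin n) ℂ) :
    Matrix (Fin n) (Fin n) ℂ →ₗ[ℝ] ℂ where
  toFun B := (C * Uᴴ * B * U).trace
  map_add' B₁ B₂ := by simp [Matrix.mul_add, Matrix.add_mul]
  map_smul' r B := by simp

theorem convexHull_image_unitaryConjTrace_subset_cNumRangeSet {n : ℕ}
    (C : Matrix (Fin n) (Fin n) ℂ) {U : Matrix (Fin n) (Fin n) ℂ}
    (hU : U ∈ unitaryGroup (Fin n) ℂ) (G : Set (Matrix (Fin n) (Fin n) ℂ)) :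
    convexHull ℝ (unitaryConjTrace C U '' G) ⊆ cNumRangeSet C (convexHull ℝ G) := by
  rw [← LinearMap.image_convexHull]
  rintro _ ⟨B, hB, rfl⟩
  exact Set.mem_biUnion hB ⟨U, hU, rfl⟩

theorem stmt_17 {n : ℕ} (C : Matrix (Fin n) (Fin n) ℂ)
    (G : Set (Matrix (Fin n) (Fin n) ℂ)) (μ : ℂ)
    (hμ : μ ∈ cNumRangeSet C (convexHull ℝ G))
    (hb : μ ∈ frontier (cNumRangeSet C (convexHull ℝ G))) :
    ∃ B₁ ∈ G, ∃ B₂ ∈ G, ∃ V ∈ Matrix.unitaryGroup (Fin n) ℂ,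
      μ ∈ segment ℝ ((C * Vᴴ * B₁ * V).trace) ((C * Vᴴ * B₂ * V).trace) := by
  obtain ⟨A, hA, U, hU, rfl⟩ : ∃ A ∈ convexHull ℝ G, ∃ U ∈ unitaryGroup (Fin n) ℂ,
      μ = (C * Uᴴ * A * U).trace := by
    simpa [cNumRangeSet, cNumRange] using hμ
  have hsub := convexHull_image_unitaryConjTrace_subset_cNumRangeSet C hU G
  have hA' : unitaryConjTrace C U A ∈ convexHull ℝ (unitaryConjTrace C U '' G) := by
    rw [← LinearMap.image_convexHull]
    exact Set.mem_image_of_mem _ hA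
  obtain ⟨_, ⟨B₁, hB₁, rfl⟩, _, ⟨B₂, hB₂, rfl⟩, hseg⟩ :=
    Complex.exists_mem_segment_of_notMem_interior_convexHull hA'
      fun h => hb.2 (interior_mono hsub h)
  exact ⟨B₁, hB₁, B₂, hB₂, U, hU, hseg⟩
end
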